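/- arXiv:1505.04920 — 3 statements merged into one kernel-verified Lean document; each statement's English description precedes it below -/
import Mathlib

section
/- Suppose the agents are indexed so that the oblivious agents are exactly the agents n'+1,…,n, where 0 ≤ n' < n, so that W has the block form W = [[W¹¹, W¹²],[0, W²²]] and Λ = [[Λ¹¹, 0],[0, I_{n−n'}]], with W¹¹, Λ¹¹ of size n'×n'. Then the FJ model x(k+1) = ΛW x(k) + (I_n − Λ)u is convergent (i.e., x(k) has a limit for every u) if and only if W²² is regular, i.e. W²²_* = lim_{k→∞}(W²²)^k exists. In this case, writing u = (u¹, u²), the limit opinion x' = lim_{k→∞} x(k) is given blockwise by x'¹ = (I − Λ¹¹W¹¹)^{-1}[(I − Λ¹¹)u¹ + Λ¹¹W¹²W²²_* u²] and x'² = W²²_* u². -/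
/-!
The oblivious block evolves on its own, `x²(k) = (W²²)ᵏ u²`, so regularity of `W²²` is necessary.
The other block obeys `x¹(k+1) = Λ¹¹W¹¹ x¹(k) + d(k)`, where `d(k) → (I - Λ¹¹)u¹ + Λ¹¹W¹²W²²_* u²`
when `W²²` is regular. The matrix `Λ¹¹W¹¹` is nonnegative with row sums at most `1`, and since
every agent of the first block is stubborn or reaches a stubborn agent, the row sums of a large
enough power are all below `1`. So the powers of `Λ¹¹W¹¹` are summable,
`(I - Λ¹¹W¹¹)⁻¹ = ∑ (Λ¹¹W¹¹)ᵏ`, and the discrete variation-of-constants formula together with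
dominated convergence gives the limit.
-/

open Matrix Filter Finset Topology

section NormPow
variable {R : Type*} [SeminormedRing R]

theorem norm_pow_mul_add_le (a : R) (m q r : ℕ) : ‖a ^ (q * m + r)‖ ≤ ‖a ^ m‖ ^ q * ‖a ^ r‖ := by
  induction q with
  | zero => simp
  | succ q ih =>
    calc ‖a ^ ((q + 1) * m + r)‖ = ‖a ^ m * a ^ (q * m + r)‖ := by rw [← pow_add]; ring_nf
    _ ≤ ‖a ^ m‖ * ‖a ^ (q * m + r)‖ := norm_mul_le _ _
    _ ≤ ‖a ^ m‖ * (‖a ^ m‖ ^ q * ‖a ^ r‖) := by gcongr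
    _ = ‖a ^ m‖ ^ (q + 1) * ‖a ^ r‖ := by ring

theorem summable_norm_pow_of_norm_pow_lt_one {a : R} {m : ℕ} (hm : m ≠ 0) (ha : ‖a ^ m‖ < 1) :
    Summable fun k => ‖a ^ k‖ := by
  have : NeZero m := ⟨hm⟩
  rw [← (Nat.divModEquiv m).symm.summable_iff]
  have hgeom : Summable fun p : ℕ × Fin m => ‖a ^ m‖ ^ p.1 * ‖a ^ (p.2 : ℕ)‖ :=
    (summable_geometric_of_lt_one (norm_nonneg _) ha).mul_of_nonneg
      (Summable.of_finite (f := fun r : Fin m => ‖a ^ (r : ℕ)‖))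
      (fun _ => by positivity) (fun _ => norm_nonneg _)
  exact hgeom.of_nonneg_of_le (fun _ => norm_nonneg _) fun p => norm_pow_mul_add_le a m p.1 p.2

end NormPow

section Nonneg
variable {m n : Type*} [Fintype n] {A : Matrix m n ℝ}

theorem Matrix.mulVec_mono_of_nonneg (hA : ∀ i j, 0 ≤ A i j) {v w : n → ℝ} (hvw : v ≤ w) :
    A *ᵥ v ≤ A *ᵥ w :=
  fun i => dotProduct_le_dotProduct_of_nonneg_left hvw (hA i)

theorem Matrix.mulVec_apply_lt_of_pos (hA : ∀ i j, 0 ≤ A i j) {v w : n → ℝ} (hvw : v ≤ w)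
    {i : m} {c : n} (hic : 0 < A i c) (hc : v c < w c) : (A *ᵥ v) i < (A *ᵥ w) i :=
  Finset.sum_lt_sum (fun j _ => mul_le_mul_of_nonneg_left (hvw j) (hA i j))
    ⟨c, mem_univ c, mul_lt_mul_of_pos_left hc hic⟩

end Nonneg

section Substochastic
variable {ι : Type*} [Fintype ι] [DecidableEq ι]

theorem Matrix.pow_mulVec_one_le_one {A : Matrix ι ι ℝ} (hA0 : ∀ i j, 0 ≤ A i j)
    (hA1 : A *ᵥ 1 ≤ 1) (k : ℕ) : A ^ k *ᵥ 1 ≤ 1 := by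
  induction k with
  | zero => simp
  | succ k ih =>
    rw [pow_succ', ← mulVec_mulVec]
    exact (mulVec_mono_of_nonneg hA0 ih).trans hA1

variable {W : Matrix ι ι ℝ} {lam : ι → ℝ}

theorem Matrix.diagonal_mul_mulVec_apply (v : ι → ℝ) (a : ι) :
    ((diagonal lam * W) *ᵥ v) a = lam a * (W *ᵥ v) a := by
  rw [← mulVec_mulVec, mulVec_diagonal]

theorem Matrix.diagonal_mul_apply_nonneg (hW0 : ∀ i j, 0 ≤ W i j) (hlam0 : 0 ≤ lam) (a b : ι) :
    0 ≤ (diagonal lam * W) a b := by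
  rw [diagonal_mul]
  exact mul_nonneg (hlam0 a) (hW0 a b)

theorem Matrix.diagonal_mul_mulVec_apply_lt_one (hW0 : ∀ i j, 0 ≤ W i j) (hW1 : W *ᵥ 1 ≤ 1)
    (hlam0 : 0 ≤ lam) (hlam1 : lam ≤ 1) {v : ι → ℝ} (hv : v ≤ 1) {a : ι}
    (ha : lam a < 1 ∨ ∃ c, 0 < W a c ∧ v c < 1) : ((diagonal lam * W) *ᵥ v) a < 1 := by
  have hWv : (W *ᵥ v) a ≤ 1 := (mulVec_mono_of_nonneg hW0 hv a).trans (hW1 a)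
  rw [diagonal_mul_mulVec_apply]
  by_cases hstub : lam a < 1
  · calc lam a * (W *ᵥ v) a ≤ lam a * 1 := mul_le_mul_of_nonneg_left hWv (hlam0 a)
    _ < 1 := by simpa using hstub
  · obtain ⟨c, hac, hc⟩ := ha.resolve_left hstub
    rw [le_antisymm (hlam1 a) (not_lt.mp hstub), Pi.one_apply, one_mul]
    exact (mulVec_apply_lt_of_pos hW0 hv hac hc).trans_le (hW1 a)

theorem eventually_diagonal_mul_pow_mulVec_one_lt_one (hW0 : ∀ i j, 0 ≤ W i j)
    (hW1 : W *ᵥ 1 ≤ 1) (hlam0 : 0 ≤ lam) (hlam1 : lam ≤ 1) {i j : ι}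
    (hij : Relation.ReflTransGen (fun a b => 0 < W a b) i j) (hj : lam j < 1) :
    ∀ᶠ k in atTop, ((diagonal lam * W) ^ k *ᵥ 1) i < 1 := by
  have hP1 : (diagonal lam * W) *ᵥ 1 ≤ 1 := fun a => by
    rw [diagonal_mul_mulVec_apply]
    exact mul_le_one₀ (hlam1 a) (dotProduct_nonneg_of_nonneg (hW0 a) zero_le_one) (hW1 a)
  have hpow := pow_mulVec_one_le_one (diagonal_mul_apply_nonneg hW0 hlam0) hP1
  have hstep : ∀ a, (lam a < 1 ∨ ∃ c, 0 < W a c ∧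
      ∀ᶠ k in atTop, ((diagonal lam * W) ^ k *ᵥ 1) c < 1) →
      ∀ᶠ k in atTop, ((diagonal lam * W) ^ k *ᵥ 1) a < 1 := by
    intro a ha
    rw [← map_add_atTop_eq_nat 1, eventually_map]
    have hlt : ∀ k, (lam a < 1 ∨ ∃ c, 0 < W a c ∧ ((diagonal lam * W) ^ k *ᵥ 1) c < 1) →
        ((diagonal lam * W) ^ (k + 1) *ᵥ 1) a < 1 := fun k hk => by
      rw [pow_succ', ← mulVec_mulVec]
      exact diagonal_mul_mulVec_apply_lt_one hW0 hW1 hlam0 hlam1 (hpow k) hk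
    rcases ha with hstub | ⟨c, hac, hc⟩
    · exact .of_forall fun k => hlt k (.inl hstub)
    · exact hc.mono fun k hk => hlt k (.inr ⟨c, hac, hk⟩)
  induction hij using Relation.ReflTransGen.head_induction_on with
  | refl => exact hstep j (.inl hj)
  | head hac _ ih => exact hstep _ (.inr ⟨_, hac, ih⟩)

end Substochastic

theorem Matrix.eq_pow_mulVec_add_sum_of_forall_eq {ι R : Type*} [Fintype ι] [DecidableEq ι]
    [Semiring R] {A : Matrix ι ι R} {x d : ℕ → ι → R} (hx : ∀ k, x (k + 1) = A *ᵥ x k + d k)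
    (k : ℕ) :
    x k = A ^ k *ᵥ x 0 + ∑ i ∈ range k, A ^ i *ᵥ d (k - 1 - i) := by
  induction k with
  | zero => simp
  | succ k ih =>
    have hsum : ∑ i ∈ range k, A ^ (i + 1) *ᵥ d (k + 1 - 1 - (i + 1))
        = A *ᵥ ∑ i ∈ range k, A ^ i *ᵥ d (k - 1 - i) := by
      rw [mulVec_sum]
      refine sum_congr rfl fun i _ => ?_
      rw [mulVec_mulVec, ← pow_succ', show k + 1 - 1 - (i + 1) = k - 1 - i by omega]
    rw [hx, ih, sum_range_succ', hsum, mulVec_add, mulVec_mulVec, ← pow_succ']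
    simp [add_assoc]

section LinftyOp
attribute [local instance] Matrix.linftyOpNormedRing Matrix.linftyOpNormedAlgebra
variable {ι : Type*} [Fintype ι] [DecidableEq ι]

theorem Matrix.linfty_opNorm_lt_one_of_mulVec_one_lt {A : Matrix ι ι ℝ} (hA0 : ∀ i j, 0 ≤ A i j)
    (hA1 : ∀ i, (A *ᵥ 1) i < 1) : ‖A‖ < 1 := by
  rw [linfty_opNorm_def, ← NNReal.coe_one, NNReal.coe_lt_coe, Finset.sup_lt_iff zero_lt_one]
  intro i _
  rw [← NNReal.coe_lt_coe, NNReal.coe_sum]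
  simpa [mulVec, dotProduct, Real.norm_of_nonneg (hA0 i _)] using hA1 i

theorem summable_pow_diagonal_mul {W : Matrix ι ι ℝ} {lam : ι → ℝ} (hW0 : ∀ i j, 0 ≤ W i j)
    (hW1 : W *ᵥ 1 ≤ 1) (hlam0 : 0 ≤ lam) (hlam1 : lam ≤ 1)
    (hreach : ∀ i, ∃ j, Relation.ReflTransGen (fun a b => 0 < W a b) i j ∧ lam j < 1) :
    Summable fun k => (diagonal lam * W) ^ k := by
  have hev : ∀ᶠ k in atTop, k ≠ 0 ∧ ∀ i, ((diagonal lam * W) ^ k *ᵥ 1) i < 1 :=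
    (eventually_ne_atTop 0).and <| eventually_all.2 fun i =>
      let ⟨_, hij, hj⟩ := hreach i
      eventually_diagonal_mul_pow_mulVec_one_lt_one hW0 hW1 hlam0 hlam1 hij hj
  obtain ⟨m, hm, hlt⟩ := hev.exists
  exact (summable_norm_pow_of_norm_pow_lt_one hm <| linfty_opNorm_lt_one_of_mulVec_one_lt
    (pow_apply_nonneg (diagonal_mul_apply_nonneg hW0 hlam0) m) hlt).of_norm

theorem tendsto_sum_range_mulVec_of_summable {f : ℕ → Matrix ι ι ℝ} (hf : Summable f)
    {d : ℕ → ι → ℝ} {δ : ι → ℝ} (hd : Tendsto d atTop (𝓝 δ)) :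
    Tendsto (fun k => ∑ i ∈ range k, f i *ᵥ d (k - 1 - i)) atTop (𝓝 ((∑' i, f i) *ᵥ δ)) := by
  obtain ⟨C, hC⟩ : ∃ C, ∀ t, ‖d t‖ ≤ C :=
    let ⟨C, hC⟩ := hd.norm.bddAbove_range; ⟨C, fun t => hC ⟨t, rfl⟩⟩
  set F : ℕ → ℕ → ι → ℝ := fun k i => if i < k then f i *ᵥ d (k - 1 - i) else 0
  have hF : ∀ k, ∑' i, F k i = ∑ i ∈ range k, f i *ᵥ d (k - 1 - i) := fun k => by
    rw [tsum_eq_sum (s := range k) fun i hi => if_neg (by simpa using hi)]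
    exact sum_congr rfl fun i hi => if_pos (by simpa using hi)
  have hlim : ∀ i, Tendsto (fun k => F k i) atTop (𝓝 (f i *ᵥ δ)) := fun i => by
    have hshift : Tendsto (fun k => d (k - 1 - i)) atTop (𝓝 δ) :=
      hd.comp <| by simpa [Nat.sub_sub] using tendsto_sub_atTop_nat (1 + i)
    refine (((continuous_const.matrix_mulVec continuous_id).tendsto δ).comp hshift).congr' ?_
    filter_upwards [eventually_gt_atTop i] with k hk
    exact (if_pos hk).symm
  have hbound : ∀ k i, ‖F k i‖ ≤ ‖f i‖ * C := fun k i => by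
    by_cases hik : i < k
    · simp only [F, if_pos hik]
      exact (linfty_opNorm_mulVec _ _).trans (mul_le_mul_of_nonneg_left (hC _) (norm_nonneg _))
    · simp only [F, if_neg hik, norm_zero]
      exact mul_nonneg (norm_nonneg _) ((norm_nonneg _).trans (hC 0))
  have hsum : ∑' i, f i *ᵥ δ = (∑' i, f i) *ᵥ δ :=
    (hf.hasSum.map (mulVec.addMonoidHomLeft δ)
      (continuous_id.matrix_mulVec continuous_const)).tsum_eq
  rw [← hsum]
  exact (tendsto_tsum_of_dominated_convergence ((summable_norm_iff.2 hf).mul_right C) hlim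
    (.of_forall hbound)).congr hF

end LinftyOp

theorem tendsto_of_forall_eq_mulVec_add {ι : Type*} [Fintype ι] [DecidableEq ι]
    {A : Matrix ι ι ℝ} (hA : Summable fun k => A ^ k) {x d : ℕ → ι → ℝ}
    (hx : ∀ k, x (k + 1) = A *ᵥ x k + d k) {δ : ι → ℝ} (hd : Tendsto d atTop (𝓝 δ)) :
    Tendsto x atTop (𝓝 ((1 - A)⁻¹ *ᵥ δ)) := by
  have hinv : (1 - A)⁻¹ = ∑' k, A ^ k := inv_eq_left_inv hA.tsum_pow_mul_one_sub
  have hfree : Tendsto (fun k => A ^ k *ᵥ x 0) atTop (𝓝 0) := by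
    have := ((continuous_id.matrix_mulVec (continuous_const (y := x 0))).tendsto 0).comp
      hA.tendsto_atTop_zero
    rwa [id, zero_mulVec] at this
  rw [hinv, ← zero_add ((∑' k, A ^ k) *ᵥ δ)]
  exact (hfree.add (tendsto_sum_range_mulVec_of_summable hA hd)).congr fun k =>
    (eq_pow_mulVec_add_sum_of_forall_eq hx k).symm

theorem Relation.TransGen.sum_inl {α β : Type*} {r : α ⊕ β → α ⊕ β → Prop}
    (hr : ∀ a b, ¬ r (Sum.inr b) (Sum.inl a)) {a a' : α}
    (h : Relation.TransGen r (Sum.inl a) (Sum.inl a')) :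
    Relation.TransGen (fun x y => r (Sum.inl x) (Sum.inl y)) a a' := by
  suffices ∀ q, Relation.TransGen r (Sum.inl a) q → ∀ a', q = Sum.inl a' →
      Relation.TransGen (fun x y => r (Sum.inl x) (Sum.inl y)) a a' from this _ h a' rfl
  intro q hq
  induction hq with
  | single hq => rintro a' rfl; exact .single hq
  | @tail c _ _ hcq ih =>
    rintro a' rfl
    cases c with
    | inl c => exact (ih c rfl).tail hcq
    | inr c => exact absurd hcq (hr a' c)

theorem Filter.Tendsto.sum_elim {α β X L : Type*} [TopologicalSpace X] {l : Filter L}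
    {f : L → α ⊕ β → X} {a : α → X} {b : β → X} (ha : Tendsto (fun k => f k ∘ Sum.inl) l (𝓝 a))
    (hb : Tendsto (fun k => f k ∘ Sum.inr) l (𝓝 b)) : Tendsto f l (𝓝 (Sum.elim a b)) := by
  rw [tendsto_pi_nhds] at ha hb ⊢
  rintro (i | j)
  exacts [ha i, hb j]

theorem Matrix.exists_tendsto_of_forall_exists_tendsto_mulVec {m n R L : Type*} [Fintype n]
    [DecidableEq n] [Semiring R] [TopologicalSpace R] {l : Filter L} {f : L → Matrix m n R}
    (h : ∀ v, ∃ w, Tendsto (fun k => f k *ᵥ v) l (𝓝 w)) : ∃ M, Tendsto f l (𝓝 M) := by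
  choose w hw using h
  refine ⟨of fun i j => w (Pi.single j 1) i,
    tendsto_pi_nhds.2 fun i => tendsto_pi_nhds.2 fun j => ?_⟩
  simpa [mulVec_single_one] using tendsto_pi_nhds.1 (hw (Pi.single j 1)) i

theorem Matrix.mulVec_one_le_one_of_fromBlocks {ι κ : Type*} [Fintype ι] [Fintype κ]
    {A : Matrix ι ι ℝ} {B : Matrix ι κ ℝ} {C : Matrix κ ι ℝ} {D : Matrix κ κ ℝ}
    (hB : ∀ i j, 0 ≤ B i j) (h : ∀ i, ∑ j, fromBlocks A B C D i j ≤ 1) : A *ᵥ 1 ≤ 1 := by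
  intro i
  have hi := h (Sum.inl i)
  rw [Fintype.sum_sum_type] at hi
  simp only [fromBlocks_apply₁₁, fromBlocks_apply₁₂] at hi
  have := sum_nonneg fun j (_ : j ∈ univ) => hB i j
  simp only [mulVec, dotProduct, Pi.one_apply, mul_one]
  linarith

section BlockTriangular
variable {ι κ : Type*} [Fintype ι] [Fintype κ] [DecidableEq κ]
  {A : Matrix ι ι ℝ} {B : Matrix ι κ ℝ} {D : Matrix κ κ ℝ} {c : ι → ℝ}
  {T : (ι ⊕ κ → ℝ) → ι ⊕ κ → ℝ}

theorem iterate_comp_inr_of_fromBlocks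
    (hT : ∀ x, T x = Sum.elim (A *ᵥ (x ∘ Sum.inl) + B *ᵥ (x ∘ Sum.inr) + c) (D *ᵥ (x ∘ Sum.inr)))
    (x : ι ⊕ κ → ℝ) (k : ℕ) : T^[k] x ∘ Sum.inr = D ^ k *ᵥ (x ∘ Sum.inr) := by
  induction k with
  | zero => simp
  | succ k ih =>
    rw [Function.iterate_succ_apply', hT, Sum.elim_comp_inr, ih, mulVec_mulVec, pow_succ']

theorem tendsto_iterate_of_fromBlocks [DecidableEq ι]
    (hT : ∀ x, T x = Sum.elim (A *ᵥ (x ∘ Sum.inl) + B *ᵥ (x ∘ Sum.inr) + c) (D *ᵥ (x ∘ Sum.inr)))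
    (hA : Summable fun k => A ^ k) {Dstar : Matrix κ κ ℝ} (hD : Tendsto (D ^ ·) atTop (𝓝 Dstar))
    (x : ι ⊕ κ → ℝ) :
    Tendsto (fun k => T^[k] x) atTop (𝓝 (Sum.elim ((1 - A)⁻¹ *ᵥ (c + (B * Dstar) *ᵥ (x ∘ Sum.inr)))
      (Dstar *ᵥ (x ∘ Sum.inr)))) := by
  have hinr : Tendsto (fun k => T^[k] x ∘ Sum.inr) atTop (𝓝 (Dstar *ᵥ (x ∘ Sum.inr))) := by
    simp_rw [iterate_comp_inr_of_fromBlocks hT]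
    exact ((continuous_id.matrix_mulVec continuous_const).tendsto _).comp hD
  have hd : Tendsto (fun k => c + B *ᵥ (T^[k] x ∘ Sum.inr)) atTop
      (𝓝 (c + (B * Dstar) *ᵥ (x ∘ Sum.inr))) := by
    rw [← mulVec_mulVec]
    exact tendsto_const_nhds.add
      (((continuous_const.matrix_mulVec continuous_id).tendsto _).comp hinr)
  refine .sum_elim (tendsto_of_forall_eq_mulVec_add hA (fun k => ?_) hd) hinr
  rw [Function.iterate_succ_apply', hT, Sum.elim_comp_inl]
  abel

end BlockTriangular

theorem fj_step_fromBlocks {ι κ : Type*} [Fintype ι] [Fintype κ] [DecidableEq ι] [DecidableEq κ]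
    (W11 : Matrix ι ι ℝ) (W12 : Matrix ι κ ℝ) (W22 : Matrix κ κ ℝ) (lam1 : ι → ℝ)
    (u x : ι ⊕ κ → ℝ) :
    (diagonal (Sum.elim lam1 fun _ => 1) * fromBlocks W11 W12 0 W22) *ᵥ x
        + (1 - diagonal (Sum.elim lam1 fun _ => 1)) *ᵥ u
      = Sum.elim ((diagonal lam1 * W11) *ᵥ (x ∘ Sum.inl) + (diagonal lam1 * W12) *ᵥ (x ∘ Sum.inr)
          + (1 - diagonal lam1) *ᵥ (u ∘ Sum.inl)) (W22 *ᵥ (x ∘ Sum.inr)) := by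
  rw [← fromBlocks_diagonal, ← fromBlocks_one, fromBlocks_multiply, sub_eq_add_neg, fromBlocks_neg,
    fromBlocks_add, fromBlocks_mulVec, fromBlocks_mulVec, ← sub_eq_add_neg]
  ext (i | j) <;> simp [add_assoc]

theorem fj_exists_reflTransGen_of_not_oblivious {ι κ : Type*} {W11 : Matrix ι ι ℝ}
    {W12 : Matrix ι κ ℝ} {W22 : Matrix κ κ ℝ} {lam1 : ι → ℝ} {i : ι}
    (hi : Sum.elim lam1 (fun _ => 1) (Sum.inl i : ι ⊕ κ) < 1 ∨
      ∃ j, Sum.elim lam1 (fun _ => 1) j < 1 ∧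
        Relation.TransGen (fun a b => 0 < fromBlocks W11 W12 0 W22 a b) (Sum.inl i) j) :
    ∃ j, Relation.ReflTransGen (fun a b => 0 < W11 a b) i j ∧ lam1 j < 1 := by
  rcases hi with hi | ⟨j | j, hj, hij⟩
  · exact ⟨i, .refl, hi⟩
  · exact ⟨j, (hij.sum_inl fun a b => by simp).to_reflTransGen, hj⟩
  · simp at hj

theorem fj_oblivious_convergence_general {n₁ n₂ : ℕ}
    (W11 : Matrix (Fin n₁) (Fin n₁) ℝ) (W12 : Matrix (Fin n₁) (Fin n₂) ℝ)
    (W22 : Matrix (Fin n₂) (Fin n₂) ℝ) (lam1 : Fin n₁ → ℝ)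
    (W : Matrix (Fin n₁ ⊕ Fin n₂) (Fin n₁ ⊕ Fin n₂) ℝ)
    (hWblock : W = Matrix.fromBlocks W11 W12 0 W22)
    (lam : Fin n₁ ⊕ Fin n₂ → ℝ)
    (hlamblock : lam = Sum.elim lam1 (fun _ => 1))
    (hW0 : ∀ i j, 0 ≤ W i j) (hW1 : ∀ i, ∑ j, W i j = 1)
    (hlam : ∀ i, 0 ≤ lam i ∧ lam i ≤ 1)
    -- the oblivious agents (neither stubborn nor connected by a walk to a stubborn agent)
    -- are exactly the agents of the second block:
    (hobl : ∀ i : Fin n₁ ⊕ Fin n₂,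
      (¬ (lam i < 1 ∨ ∃ j, lam j < 1 ∧ Relation.TransGen (fun a b => 0 < W a b) i j)) ↔
        ∃ i₂ : Fin n₂, i = Sum.inr i₂) :
    -- convergence for every prejudice is equivalent to the regularity of W²²:
    ((∀ u : Fin n₁ ⊕ Fin n₂ → ℝ, ∃ L : Fin n₁ ⊕ Fin n₂ → ℝ,
        Tendsto (fun k => (fun x => (Matrix.diagonal lam * W).mulVec x
            + (1 - Matrix.diagonal lam).mulVec u)^[k] u) atTop (nhds L)) ↔
      (∃ W22star : Matrix (Fin n₂) (Fin n₂) ℝ,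
        Tendsto (fun k => W22 ^ k) atTop (nhds W22star))) ∧
    -- and in this case the limit opinion is given blockwise:
    (∀ W22star : Matrix (Fin n₂) (Fin n₂) ℝ,
      Tendsto (fun k => W22 ^ k) atTop (nhds W22star) →
      ∀ u : Fin n₁ ⊕ Fin n₂ → ℝ,
        Tendsto (fun k => (fun x => (Matrix.diagonal lam * W).mulVec x
            + (1 - Matrix.diagonal lam).mulVec u)^[k] u) atTop
          (nhds (Sum.elim
            ((1 - Matrix.diagonal lam1 * W11)⁻¹.mulVec
              ((1 - Matrix.diagonal lam1).mulVec (fun i => u (Sum.inl i))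
                + (Matrix.diagonal lam1 * W12 * W22star).mulVec (fun j => u (Sum.inr j))))
            (W22star.mulVec (fun j => u (Sum.inr j)))))) := by
  subst hWblock hlamblock
  have hreach : ∀ i, ∃ j, Relation.ReflTransGen (fun a b => 0 < W11 a b) i j ∧ lam1 j < 1 :=
    fun i => fj_exists_reflTransGen_of_not_oblivious <| not_not.1 fun h => by
      simpa using (hobl (.inl i)).1 h
  have hA : Summable fun k => (diagonal lam1 * W11) ^ k :=
    summable_pow_diagonal_mul (fun i j => hW0 (.inl i) (.inl j))
      (mulVec_one_le_one_of_fromBlocks (fun i j => hW0 (.inl i) (.inr j)) fun i => (hW1 i).le)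
      (fun i => (hlam (.inl i)).1) (fun i => (hlam (.inl i)).2) hreach
  have hT := fj_step_fromBlocks W11 W12 W22 lam1
  have hlim := fun W22star (hW22 : Tendsto (W22 ^ ·) atTop (𝓝 W22star)) u =>
    tendsto_iterate_of_fromBlocks (hT u) hA hW22 u
  refine ⟨⟨fun hconv => exists_tendsto_of_forall_exists_tendsto_mulVec fun v => ?_,
    fun ⟨W22star, hW22⟩ u => ⟨_, hlim W22star hW22 u⟩⟩, hlim⟩
  obtain ⟨L, hL⟩ := hconv (Sum.elim 0 v)
  exact ⟨L ∘ Sum.inr, (((continuous_pi fun j => continuous_apply (Sum.inr j)).tendsto L).comp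
    hL).congr (iterate_comp_inr_of_fromBlocks (hT _) _)⟩

/-- with oblivious agents exactly those in the second block (indices n'+1..n),
so that W = [[W¹¹,W¹²],[0,W²²]] and Λ = [[Λ¹¹,0],[0,I]], the FJ model is convergent iff
W²² is regular, in which case x(k) → x' with
x'¹ = (I-Λ¹¹W¹¹)⁻¹[(I-Λ¹¹)u¹ + Λ¹¹W¹²W²²_* u²] and x'² = W²²_* u². -/
theorem fj_oblivious_convergence {n₁ n₂ : ℕ} (hn₂ : 0 < n₂)
    (W11 : Matrix (Fin n₁) (Fin n₁) ℝ) (W12 : Matrix (Fin n₁) (Fin n₂) ℝ)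
    (W22 : Matrix (Fin n₂) (Fin n₂) ℝ) (lam1 : Fin n₁ → ℝ)
    (W : Matrix (Fin n₁ ⊕ Fin n₂) (Fin n₁ ⊕ Fin n₂) ℝ)
    (hWblock : W = Matrix.fromBlocks W11 W12 0 W22)
    (lam : Fin n₁ ⊕ Fin n₂ → ℝ)
    (hlamblock : lam = Sum.elim lam1 (fun _ => 1))
    (hW0 : ∀ i j, 0 ≤ W i j) (hW1 : ∀ i, ∑ j, W i j = 1)
    (hlam : ∀ i, 0 ≤ lam i ∧ lam i ≤ 1)
    -- the oblivious agents (neither stubborn nor connected by a walk to a stubborn agent)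
    -- are exactly the agents of the second block:
    (hobl : ∀ i : Fin n₁ ⊕ Fin n₂,
      (¬ (lam i < 1 ∨ ∃ j, lam j < 1 ∧ Relation.TransGen (fun a b => 0 < W a b) i j)) ↔
        ∃ i₂ : Fin n₂, i = Sum.inr i₂) :
    -- convergence for every prejudice is equivalent to the regularity of W²²:
    ((∀ u : Fin n₁ ⊕ Fin n₂ → ℝ, ∃ L : Fin n₁ ⊕ Fin n₂ → ℝ,
        Tendsto (fun k => (fun x => (Matrix.diagonal lam * W).mulVec x
            + (1 - Matrix.diagonal lam).mulVec u)^[k] u) atTop (nhds L)) ↔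
      (∃ W22star : Matrix (Fin n₂) (Fin n₂) ℝ,
        Tendsto (fun k => W22 ^ k) atTop (nhds W22star))) ∧
    -- and in this case the limit opinion is given blockwise:
    (∀ W22star : Matrix (Fin n₂) (Fin n₂) ℝ,
      Tendsto (fun k => W22 ^ k) atTop (nhds W22star) →
      ∀ u : Fin n₁ ⊕ Fin n₂ → ℝ,
        Tendsto (fun k => (fun x => (Matrix.diagonal lam * W).mulVec x
            + (1 - Matrix.diagonal lam).mulVec u)^[k] u) atTop
          (nhds (Sum.elim
            ((1 - Matrix.diagonal lam1 * W11)⁻¹.mulVec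
              ((1 - Matrix.diagonal lam1).mulVec (fun i => u (Sum.inl i))
                + (Matrix.diagonal lam1 * W12 * W22star).mulVec (fun j => u (Sum.inr j))))
            (W22star.mulVec (fun j => u (Sum.inr j)))))) :=
  fj_oblivious_convergence_general W11 W12 W22 lam1 W hWblock lam hlamblock hW0 hW1 hlam hobl
end

section
/- Let C ∈ ℝ^{m×m} with ρ(C) = 1. Then the matrix ΛW ⊗ C is Schur stable if and only if ΛW is Schur stable, which in turn holds if and only if there are no oblivious agents, i.e. every agent is stubborn or connected by a walk in G[W] to a stubborn agent. -/
open Matrix Kronecker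
open scoped ENNReal NNReal

set_option maxHeartbeats 1000000

/-- Spectral radius of a real matrix: the supremum of moduli of its complex eigenvalues. -/
noncomputable def specRad {ι : Type*} [Fintype ι] [DecidableEq ι] (A : Matrix ι ι ℝ) : ℝ :=
  sSup ((fun z : ℂ => ‖z‖) '' spectrum ℂ (A.map (algebraMap ℝ ℂ)))

attribute [local instance] Matrix.linftyOpNormedRing Matrix.linftyOpNormedAlgebra

noncomputable local instance {ι : Type*} [Fintype ι] [DecidableEq ι] :
    CompleteSpace (Matrix ι ι ℂ) :=
  FiniteDimensional.complete ℂ _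

private theorem mem_spec_iff_det {ι : Type*} [Fintype ι] [DecidableEq ι] (M : Matrix ι ι ℂ) (z : ℂ) :
    z ∈ spectrum ℂ M ↔ Matrix.det (z • 1 - M) = 0 := by
  simp [spectrum.mem_iff, Algebra.algebraMap_eq_smul_one, Matrix.isUnit_iff_isUnit_det,
    isUnit_iff_ne_zero]

private theorem mem_spec_of_vec {ι : Type*} [Fintype ι] [DecidableEq ι] {M : Matrix ι ι ℂ} {z : ℂ}
    {v : ι → ℂ} (hv : v ≠ 0) (h : M *ᵥ v = z • v) : z ∈ spectrum ℂ M := by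
  rw [mem_spec_iff_det, ← Matrix.exists_mulVec_eq_zero_iff]
  exact ⟨v, hv, by rw [sub_mulVec, smul_mulVec, one_mulVec, h, sub_self]⟩

private theorem vec_of_mem_spec {ι : Type*} [Fintype ι] [DecidableEq ι] {M : Matrix ι ι ℂ} {z : ℂ}
    (h : z ∈ spectrum ℂ M) : ∃ v ≠ 0, M *ᵥ v = z • v := by
  rw [mem_spec_iff_det, ← Matrix.exists_mulVec_eq_zero_iff] at h
  obtain ⟨v, hv, hv2⟩ := h
  refine ⟨v, hv, ?_⟩
  rwa [sub_mulVec, smul_mulVec, one_mulVec, sub_eq_zero, eq_comm] at hv2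

private theorem kron_spec_mem {a b : ℕ} {A : Matrix (Fin a) (Fin a) ℂ}
    {B : Matrix (Fin b) (Fin b) ℂ} {μ ν : ℂ} (hμ : μ ∈ spectrum ℂ A) (hν : ν ∈ spectrum ℂ B) :
    μ * ν ∈ spectrum ℂ (A ⊗ₖ B) := by
  obtain ⟨v, hv, hv2⟩ := vec_of_mem_spec hμ
  obtain ⟨w, hw, hw2⟩ := vec_of_mem_spec hν
  obtain ⟨i, hi⟩ := Function.ne_iff.mp hv
  obtain ⟨j, hj⟩ := Function.ne_iff.mp hw
  refine mem_spec_of_vec (M := A ⊗ₖ B) (v := fun p : Fin a × Fin b => v p.1 * w p.2) ?_ ?_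
  · intro h
    exact mul_ne_zero (by simpa using hi) (by simpa using hj) (congrFun h (i, j))
  · funext ⟨i', k'⟩
    have h1 := congrFun hv2 i'
    have h2 := congrFun hw2 k'
    simp only [Matrix.mulVec, dotProduct] at h1 h2 ⊢
    rw [show ∑ x : Fin a × Fin b, (A ⊗ₖ B) (i', k') x * (v x.1 * w x.2)
        = (∑ j, A i' j * v j) * (∑ l, B k' l * w l) by
      rw [Finset.sum_mul_sum, Fintype.sum_prod_type]
      refine Finset.sum_congr rfl fun x _ => Finset.sum_congr rfl fun y _ => ?_
      simp [Matrix.kroneckerMap_apply]; ring]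
    rw [h1, h2]
    simp only [Pi.smul_apply, smul_eq_mul]; ring

private theorem kron_map_algebraMap {a b : ℕ} (A : Matrix (Fin a) (Fin a) ℝ)
    (B : Matrix (Fin b) (Fin b) ℝ) :
    (A ⊗ₖ B).map (algebraMap ℝ ℂ) = (A.map (algebraMap ℝ ℂ)) ⊗ₖ (B.map (algebraMap ℝ ℂ)) := by
  ext ⟨i, j⟩ ⟨p, q⟩
  simp [Matrix.kroneckerMap_apply]

private theorem kron_nnnorm_le {a b : ℕ} (A : Matrix (Fin a) (Fin a) ℂ)
    (B : Matrix (Fin b) (Fin b) ℂ) : ‖A ⊗ₖ B‖₊ ≤ ‖A‖₊ * ‖B‖₊ := by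
  rw [Matrix.linfty_opNNNorm_def, Matrix.linfty_opNNNorm_def, Matrix.linfty_opNNNorm_def]
  refine Finset.sup_le fun p _ => ?_
  calc ∑ q : Fin a × Fin b, ‖(A ⊗ₖ B) p q‖₊
      = (∑ j, ‖A p.1 j‖₊) * (∑ l, ‖B p.2 l‖₊) := by
        rw [Finset.sum_mul_sum, Fintype.sum_prod_type]
        exact Finset.sum_congr rfl fun x _ => Finset.sum_congr rfl fun y _ => by
          simp [Matrix.kroneckerMap_apply, nnnorm_mul]
    _ ≤ _ := mul_le_mul' (Finset.le_sup (f := fun i => ∑ j, ‖A i j‖₊) (Finset.mem_univ p.1))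
        (Finset.le_sup (f := fun i => ∑ l, ‖B i l‖₊) (Finset.mem_univ p.2))

private theorem kron_pow {a b : ℕ} (A : Matrix (Fin a) (Fin a) ℂ) (B : Matrix (Fin b) (Fin b) ℂ)
    (k : ℕ) : (A ⊗ₖ B) ^ k = (A ^ k) ⊗ₖ (B ^ k) := by
  induction k with
  | zero => simp [Matrix.one_kronecker_one]
  | succ k ih => rw [pow_succ, pow_succ, pow_succ, ih, Matrix.mul_kronecker_mul]

private theorem specRadius_kron_le {a b : ℕ} (A : Matrix (Fin a) (Fin a) ℂ)
    (B : Matrix (Fin b) (Fin b) ℂ)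
    (hB0 : spectralRadius ℂ B ≠ 0) (hBt : spectralRadius ℂ B ≠ ⊤) :
    spectralRadius ℂ (A ⊗ₖ B) ≤ spectralRadius ℂ A * spectralRadius ℂ B := by
  have hA := spectrum.pow_nnnorm_pow_one_div_tendsto_nhds_spectralRadius A
  have hB := spectrum.pow_nnnorm_pow_one_div_tendsto_nhds_spectralRadius B
  have hAB := spectrum.pow_nnnorm_pow_one_div_tendsto_nhds_spectralRadius (A ⊗ₖ B)
  have hmul : Filter.Tendsto
      (fun k : ℕ => (‖A ^ k‖₊ : ℝ≥0∞) ^ (1 / k : ℝ) * (‖B ^ k‖₊ : ℝ≥0∞) ^ (1 / k : ℝ))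
      Filter.atTop (nhds (spectralRadius ℂ A * spectralRadius ℂ B)) :=
    ENNReal.Tendsto.mul hA (Or.inr hBt) hB (Or.inl hB0)
  refine le_of_tendsto_of_tendsto' hAB hmul fun k => ?_
  rw [kron_pow]
  calc (‖(A ^ k) ⊗ₖ (B ^ k)‖₊ : ℝ≥0∞) ^ (1 / k : ℝ)
      ≤ ((‖A ^ k‖₊ * ‖B ^ k‖₊ : ℝ≥0) : ℝ≥0∞) ^ (1 / k : ℝ) :=
        ENNReal.rpow_le_rpow (ENNReal.coe_le_coe.mpr (kron_nnnorm_le _ _)) (by positivity)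
    _ = _ := by
        rw [ENNReal.coe_mul, ENNReal.mul_rpow_of_nonneg _ _ (by positivity)]

private theorem specRad_lt_one_iff {ι : Type*} [Fintype ι] [DecidableEq ι] (M : Matrix ι ι ℝ) :
    specRad M < 1 ↔ ∀ z ∈ spectrum ℂ (M.map (algebraMap ℝ ℂ)), ‖z‖ < 1 := by
  rcases (spectrum ℂ (M.map (algebraMap ℝ ℂ))).eq_empty_or_nonempty with h | h
  · constructor
    · intro _ z hz; rw [h] at hz; exact absurd hz (Set.notMem_empty z)
    · intro _
      rw [specRad, h, Set.image_empty, Real.sSup_empty]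
      norm_num
  · have hc : IsCompact ((fun z : ℂ => ‖z‖) '' spectrum ℂ (M.map (algebraMap ℝ ℂ))) :=
      (spectrum.isCompact _).image continuous_norm
    constructor
    · intro hlt z hz
      exact lt_of_le_of_lt (le_csSup hc.bddAbove ⟨z, hz, rfl⟩) hlt
    · intro hall
      obtain ⟨z, hz, hze⟩ := hc.sSup_mem (h.image _)
      rw [specRad, ← hze]
      exact hall z hz

private theorem spectralRadius_lt_one_iff {ι : Type*} [Fintype ι] [DecidableEq ι] (M : Matrix ι ι ℂ) :
    spectralRadius ℂ M < 1 ↔ ∀ z ∈ spectrum ℂ M, ‖z‖ < 1 := by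
  constructor
  · intro hlt z hz
    have h1 : (‖z‖₊ : ℝ≥0∞) ≤ spectralRadius ℂ M := le_iSup₂ (α := ℝ≥0∞) z hz
    have h2 : (‖z‖₊ : ℝ≥0∞) < 1 := lt_of_le_of_lt h1 hlt
    have h3 : ‖z‖₊ < 1 := by exact_mod_cast h2
    exact_mod_cast h3
  · intro hall
    rcases (spectrum ℂ M).eq_empty_or_nonempty with h | h
    · rw [spectralRadius]; simp [h]
    · have := spectrum.spectralRadius_lt_of_forall_lt_of_nonempty (𝕜 := ℂ) h
        (r := 1) (fun z hz => by exact_mod_cast hall z hz)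
      simpa using this

private theorem specRad_lt_one_iff_spectralRadius {ι : Type*} [Fintype ι] [DecidableEq ι] (M : Matrix ι ι ℝ) :
    specRad M < 1 ↔ spectralRadius ℂ (M.map (algebraMap ℝ ℂ)) < 1 := by
  rw [specRad_lt_one_iff, spectralRadius_lt_one_iff]

/-- The determinant argument: if there is a nonempty "closed" set `S` on which `lam = 1`
and from which `W` has no arcs leaving, then `det (1 - diag(lam) * W) = 0`. -/
private theorem det_one_sub_eq_zero {n : ℕ} (W : Matrix (Fin n) (Fin n) ℝ) (lam : Fin n → ℝ)
    (hW1 : ∀ i, ∑ j, W i j = 1) (S : Set (Fin n)) (hne : S.Nonempty)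
    (hlamS : ∀ j ∈ S, lam j = 1) (hclosed : ∀ j ∈ S, ∀ l, l ∉ S → W j l = 0) :
    Matrix.det ((1 : Matrix (Fin n) (Fin n) ℝ) - Matrix.diagonal lam * W) = 0 := by
  classical
  set M : Matrix (Fin n) (Fin n) ℝ := (1 : Matrix (Fin n) (Fin n) ℝ) - Matrix.diagonal lam * W
    with hM
  have hMentry : ∀ i j, M i j = (if i = j then (1:ℝ) else 0) - lam i * W i j := by
    intro i j
    simp [hM, Matrix.sub_apply, Matrix.one_apply, Matrix.diagonal_mul]
  have hMzero : ∀ j ∈ S, ∀ l, l ∉ S → M j l = 0 := by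
    intro j hj l hl
    have hne' : j ≠ l := fun h => hl (h ▸ hj)
    rw [hMentry, if_neg hne', hclosed j hj l hl, mul_zero, sub_zero]
  let p : Fin n → Prop := fun i => i ∈ S
  let e : {a // p a} ⊕ {a // ¬p a} ≃ Fin n := Equiv.sumCompl p
  have hdet : M.det = (M.submatrix e e).det := (Matrix.det_submatrix_equiv_self e M).symm
  set N := M.submatrix e e with hN
  have h12 : N.toBlocks₁₂ = 0 := by
    ext ⟨j, hj⟩ ⟨l, hl⟩
    simpa [Matrix.toBlocks₁₂, hN, e, Matrix.submatrix_apply] using hMzero j hj l hl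
  have hblocks : N = Matrix.fromBlocks N.toBlocks₁₁ 0 N.toBlocks₂₁ N.toBlocks₂₂ := by
    rw [← h12, Matrix.fromBlocks_toBlocks]
  have hdet11 : N.toBlocks₁₁.det = 0 := by
    rw [← Matrix.exists_mulVec_eq_zero_iff]
    obtain ⟨i0, hi0⟩ := hne
    haveI : Nonempty {a // p a} := ⟨⟨i0, hi0⟩⟩
    refine ⟨fun _ => 1, fun h => one_ne_zero (congrFun h (Classical.arbitrary _)), ?_⟩
    funext ⟨j, hj⟩
    have hrow : ∑ l : Fin n, M j l = 0 := by
      have : ∑ l : Fin n, M j l = (∑ l, (if j = l then (1:ℝ) else 0)) - lam j * ∑ l, W j l := by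
        rw [Finset.mul_sum, ← Finset.sum_sub_distrib]
        exact Finset.sum_congr rfl fun l _ => by rw [hMentry]
      rw [this, hW1 j, hlamS j hj, Finset.sum_ite_eq Finset.univ j (fun _ => (1:ℝ))]
      simp
    have hsubsum : ∑ l : {a // p a}, M j (l : Fin n) = ∑ l : Fin n, M j l := by
      rw [← Finset.sum_subtype (Finset.univ.filter p) (fun x => by simp) (fun l => M j l),
        Finset.sum_filter]
      refine Finset.sum_congr rfl fun l _ => ?_
      by_cases hl : p l
      · rw [if_pos hl]
      · rw [if_neg hl, hMzero j hj l hl]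
    have : (N.toBlocks₁₁ *ᵥ fun _ => 1) ⟨j, hj⟩ = ∑ l : {a // p a}, M j (l : Fin n) := by
      simp [Matrix.mulVec, dotProduct, Matrix.toBlocks₁₁, hN, e, Matrix.submatrix_apply]
    rw [Pi.zero_apply, this, hsubsum, hrow]
  rw [hdet, hblocks, Matrix.det_fromBlocks_zero₁₂, hdet11, zero_mul]
 
/-- if ρ(C) = 1, then ΛW ⊗ C is Schur stable iff ΛW is Schur stable, which
holds iff there are no oblivious agents (every agent is stubborn or connected by a walk
in G[W] to a stubborn agent). -/
theorem fj_multidim_stability_rhoC_one {n m : ℕ} (W : Matrix (Fin n) (Fin n) ℝ)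
    (lam : Fin n → ℝ) (C : Matrix (Fin m) (Fin m) ℝ)
    (hW0 : ∀ i j, 0 ≤ W i j) (hW1 : ∀ i, ∑ j, W i j = 1)
    (hlam : ∀ i, 0 ≤ lam i ∧ lam i ≤ 1)
    (hC : specRad C = 1) :
    (specRad ((Matrix.diagonal lam * W) ⊗ₖ C) < 1 ↔
      specRad (Matrix.diagonal lam * W) < 1) ∧
    (specRad (Matrix.diagonal lam * W) < 1 ↔
      ∀ i : Fin n, lam i < 1 ∨
        ∃ j : Fin n, lam j < 1 ∧ Relation.TransGen (fun a b => 0 < W a b) i j) := by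
  classical
  set A : Matrix (Fin n) (Fin n) ℝ := Matrix.diagonal lam * W with hA
  set A' : Matrix (Fin n) (Fin n) ℂ := A.map (algebraMap ℝ ℂ) with hA'
  set C' : Matrix (Fin m) (Fin m) ℂ := C.map (algebraMap ℝ ℂ) with hC'
  -- facts about C
  have hCne : (spectrum ℂ C').Nonempty := by
    by_contra h
    rw [Set.not_nonempty_iff_eq_empty] at h
    rw [specRad, h] at hC
    simp [Real.sSup_empty] at hC
  have hCcompact : IsCompact ((fun z : ℂ => ‖z‖) '' spectrum ℂ C') := (spectrum.isCompact _).image continuous_norm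
  obtain ⟨ν, hν, hνnorm⟩ : ∃ ν ∈ spectrum ℂ C', ‖ν‖ = 1 := by
    obtain ⟨ν, hν, hνe⟩ := hCcompact.sSup_mem (hCne.image _)
    refine ⟨ν, hν, ?_⟩
    have h2 : ‖ν‖ = specRad C := hνe
    rw [h2, hC]
  have hCle : ∀ z ∈ spectrum ℂ C', ‖z‖ ≤ 1 := by
    intro z hz
    have h3 : ‖z‖ ≤ specRad C := le_csSup hCcompact.bddAbove ⟨z, hz, rfl⟩
    exact hC ▸ h3
  have hρC : spectralRadius ℂ C' = 1 := by
    apply le_antisymm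
    · refine iSup₂_le fun z hz => ?_
      have : ‖z‖₊ ≤ 1 := by
        have := hCle z hz
        rwa [← NNReal.coe_le_coe, coe_nnnorm, NNReal.coe_one]
      exact_mod_cast this
    · have h1 : ((‖ν‖₊ : ℝ≥0∞)) ≤ spectralRadius ℂ C' := le_iSup₂ (α := ℝ≥0∞) ν hν
      have : ‖ν‖₊ = 1 := by ext; rw [coe_nnnorm, hνnorm]; rfl
      rwa [this, ENNReal.coe_one] at h1
  -- Part 1
  have part1 : specRad (A ⊗ₖ C) < 1 ↔ specRad A < 1 := by
    constructor
    · intro hAC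
      rw [specRad_lt_one_iff] at hAC ⊢
      rw [kron_map_algebraMap] at hAC
      intro μ hμ
      have := hAC (μ * ν) (kron_spec_mem hμ hν)
      rwa [norm_mul, hνnorm, mul_one] at this
    · intro hAlt
      rw [specRad_lt_one_iff_spectralRadius] at hAlt ⊢
      rw [kron_map_algebraMap]
      calc spectralRadius ℂ (A' ⊗ₖ C') ≤ spectralRadius ℂ A' * spectralRadius ℂ C' :=
            specRadius_kron_le A' C' (by rw [hρC]; exact one_ne_zero) (by rw [hρC]; exact ENNReal.one_ne_top)
        _ = spectralRadius ℂ A' := by rw [hρC, mul_one]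
        _ < 1 := hAlt
  refine ⟨part1, ?_⟩
  -- Part 2
  constructor
  · -- Schur stability implies no oblivious agents
    intro hAlt
    by_contra hcond
    push_neg at hcond
    obtain ⟨i0, hi0a, hi0b⟩ := hcond
    have hlam0 : lam i0 = 1 := le_antisymm (hlam i0).2 hi0a
    set S : Set (Fin n) := {j | j = i0 ∨ Relation.TransGen (fun a b => 0 < W a b) i0 j} with hS
    have hlamS : ∀ j ∈ S, lam j = 1 := by
      rintro j (rfl | hj)
      · exact hlam0
      · exact le_antisymm (hlam j).2 (not_lt.mp (fun h => (hi0b j h hj).elim))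
    have hSclosed : ∀ j ∈ S, ∀ l, l ∉ S → W j l = 0 := by
      rintro j hj l hl
      by_contra hWjl
      have hpos : 0 < W j l := lt_of_le_of_ne (hW0 j l) (Ne.symm hWjl)
      apply hl
      rcases hj with rfl | hj
      · exact Or.inr (Relation.TransGen.single hpos)
      · exact Or.inr (hj.tail hpos)
    have hdet : Matrix.det ((1 : Matrix (Fin n) (Fin n) ℝ) - A) = 0 :=
      det_one_sub_eq_zero W lam hW1 S ⟨i0, Or.inl rfl⟩ hlamS hSclosed
    have hmem : (1 : ℂ) ∈ spectrum ℂ A' := by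
      rw [mem_spec_iff_det, one_smul]
      have : ((1 : Matrix (Fin n) (Fin n) ℝ) - A).map (algebraMap ℝ ℂ) = 1 - A' := by
        ext i j
        simp [hA', Matrix.map_apply, Matrix.sub_apply, Matrix.one_apply, apply_ite]
      rw [← this, ← RingHom.mapMatrix_apply, ← RingHom.map_det, hdet, map_zero]
    rw [specRad_lt_one_iff] at hAlt
    have := hAlt 1 hmem
    simp at this
  · -- no oblivious agents implies Schur stability
    intro hcond
    rw [specRad_lt_one_iff]
    intro z hz
    by_contra hz1
    push_neg at hz1
    obtain ⟨v, hv, hev⟩ := vec_of_mem_spec hz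
    obtain ⟨i1, hi1⟩ := Function.ne_iff.mp hv
    have hi1' : v i1 ≠ 0 := by simpa using hi1
    obtain ⟨i0, -, hmax⟩ := Finset.exists_max_image Finset.univ (fun i => ‖v i‖)
      ⟨i1, Finset.mem_univ i1⟩
    set Mx : ℝ := ‖v i0‖ with hMx
    have hMpos : 0 < Mx := lt_of_lt_of_le (norm_pos_iff.mpr hi1') (hmax i1 (Finset.mem_univ i1))
    have hA'entry : ∀ i j, (A.map (algebraMap ℝ ℂ)) i j = ((lam i * W i j : ℝ) : ℂ) := by
      intro i j
      simp [hA, Matrix.map_apply, Matrix.diagonal_mul, Complex.coe_algebraMap]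
    have hstep : ∀ i, ‖v i‖ = Mx → lam i = 1 ∧ ∀ j, 0 < W i j → ‖v j‖ = Mx := by
      intro i hi
      have heq := congrFun hev i
      simp only [Matrix.mulVec, dotProduct, Pi.smul_apply, smul_eq_mul] at heq
      have hnormeq : ‖z‖ * Mx = ‖∑ j, ((lam i * W i j : ℝ) : ℂ) * v j‖ := by
        rw [show ∑ j, ((lam i * W i j : ℝ) : ℂ) * v j = z * v i from by
          rw [← heq]; exact Finset.sum_congr rfl fun j _ => by rw [hA'entry]]
        rw [norm_mul, hi]
      have c3 : ‖∑ j, ((lam i * W i j : ℝ) : ℂ) * v j‖ ≤ lam i * ∑ j, W i j * ‖v j‖ := by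
        calc ‖∑ j, ((lam i * W i j : ℝ) : ℂ) * v j‖ ≤ ∑ j, ‖((lam i * W i j : ℝ) : ℂ) * v j‖ :=
              norm_sum_le _ _
          _ = ∑ j, lam i * (W i j * ‖v j‖) := by
              refine Finset.sum_congr rfl fun j _ => ?_
              rw [norm_mul, Complex.norm_real, Real.norm_eq_abs,
                abs_of_nonneg (mul_nonneg (hlam i).1 (hW0 i j)), mul_assoc]
          _ = lam i * ∑ j, W i j * ‖v j‖ := by rw [← Finset.mul_sum]
      have c4 : ∑ j, W i j * ‖v j‖ ≤ Mx := by
        calc ∑ j, W i j * ‖v j‖ ≤ ∑ j, W i j * Mx :=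
              Finset.sum_le_sum fun j _ =>
                mul_le_mul_of_nonneg_left (hmax j (Finset.mem_univ j)) (hW0 i j)
          _ = Mx := by rw [← Finset.sum_mul, hW1, one_mul]
      have chain : Mx ≤ lam i * ∑ j, W i j * ‖v j‖ := by
        calc Mx = 1 * Mx := (one_mul Mx).symm
          _ ≤ ‖z‖ * Mx := mul_le_mul_of_nonneg_right hz1 hMpos.le
          _ ≤ lam i * ∑ j, W i j * ‖v j‖ := by rw [hnormeq]; exact c3
      have hlam1 : lam i = 1 := by
        have h1 : Mx ≤ lam i * Mx :=
          chain.trans (mul_le_mul_of_nonneg_left c4 (hlam i).1)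
        have : 1 ≤ lam i := by nlinarith
        exact le_antisymm (hlam i).2 this
      have hsum_eq : ∑ j, W i j * ‖v j‖ = Mx := by
        refine le_antisymm c4 ?_
        have := chain
        rwa [hlam1, one_mul] at this
      refine ⟨hlam1, fun j hj => ?_⟩
      have hzero : ∑ j, W i j * (Mx - ‖v j‖) = 0 := by
        have : ∑ j, W i j * (Mx - ‖v j‖) = (∑ j, W i j * Mx) - ∑ j, W i j * ‖v j‖ := by
          rw [← Finset.sum_sub_distrib]
          exact Finset.sum_congr rfl fun j _ => by ring
        rw [this, ← Finset.sum_mul, hW1, one_mul, hsum_eq, sub_self]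
      have hterm := (Finset.sum_eq_zero_iff_of_nonneg fun j _ =>
        mul_nonneg (hW0 i j) (sub_nonneg.mpr (hmax j (Finset.mem_univ j)))).mp hzero
        j (Finset.mem_univ j)
      have : Mx - ‖v j‖ = 0 := by
        rcases mul_eq_zero.mp hterm with h | h
        · exact absurd h (ne_of_gt hj)
        · exact h
      linarith [this]
    have hclosureT : ∀ jj : Fin n, Relation.TransGen (fun a b => 0 < W a b) i0 jj → ‖v jj‖ = Mx := by
      intro jj htg
      induction htg with
      | single hr => exact (hstep i0 rfl).2 _ hr
      | tail _ hr ih => exact (hstep _ ih).2 _ hr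
    rcases hcond i0 with h | ⟨j, hj1, hj2⟩
    · exact absurd (hstep i0 rfl).1 (ne_of_lt h)
    · exact absurd (hstep j (hclosureT j hj2)).1 (ne_of_lt hj1)
end

section
/- Suppose the oblivious agents are exactly the agents n'+1,…,n with 0 ≤ n' < n, so that W = [[W¹¹, W¹²],[0, W²²]] and Λ = [[Λ¹¹, 0],[0, I_{n−n'}]]. Then the multidimensional model x(k+1) = (ΛW ⊗ C) x(k) + ((I_n − Λ) ⊗ I_m) u, x(0) = u, is convergent (x(k) has a limit for every u ∈ ℝ^{mn}) if and only if C is regular and either C_* := lim_{k→∞} C^k = 0 or W²² is regular. -/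
/-!
Write `P = ΛW = [[A, B], [0, W²²]]` with `A = Λ¹¹W¹¹`, and `b = ((I - Λ) ⊗ I) u`, which vanishes on
the oblivious block. Then `x(k) = (P ⊗ C)^k u + ∑_{j<k} (P ⊗ C)^j b` and `(P ⊗ C)^k = P^k ⊗ C^k`.

The matrix `A` is substochastic, and every row of it reaches, in the graph of `A`, a row whose
sum is `< 1` (this is what "not oblivious" means). Hence some power of `A` has all row sums `< 1`,
the row sums of `A^k` decay geometrically, and `∑ A^k` converges. Consequently the series part of
`x(k)` always converges once `C^k` is bounded, the block `A^k` of `P^k` tends to `0`, and the block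
`∑_a A^a B (W²²)^(k-1-a)` converges whenever `(W²²)^k` does. So `P^k ⊗ C^k` converges if `C^k`
converges and either `C^k → 0` (then `P^k` bounded suffices) or `W²²` is regular.

Conversely, inputs `u = w ⊗ v` with `w` supported on the oblivious block give `b = 0`, and on that
block `x(k) = (W²²)^k w ⊗ C^k v`. Since `W²²` is stochastic, `w = 1` recovers `C^k v`, so `C` is
regular; if `C_* ≠ 0`, dividing by a nonzero entry of `C^k` recovers the entries of `(W²²)^k`.
-/

open Filter Matrix Kronecker Finset Topology

theorem tendsto_sum_range_mul_sub {f g : ℕ → ℝ} {c : ℝ} (hf : Summable f)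
    (hg : Tendsto g atTop (𝓝 c)) :
    Tendsto (fun k => ∑ a ∈ range k, f a * g (k - 1 - a)) atTop (𝓝 ((∑' a, f a) * c)) := by
  obtain ⟨B, hB⟩ := hg.abs.bddAbove_range
  have hgB : ∀ j, |g j| ≤ B := fun j => hB ⟨j, rfl⟩
  rw [← hf.tsum_mul_right]
  refine (tendsto_tsum_of_dominated_convergence (bound := fun a => |f a| * B)
    (f := fun k a => if a < k then f a * g (k - 1 - a) else 0) (hf.abs.mul_right B)
    (fun a => ?_) (.of_forall fun k a => ?_)).congr fun k => ?_
  · refine ((hg.comp (tendsto_sub_atTop_nat (1 + a))).const_mul (f a)).congr' ?_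
    filter_upwards [eventually_gt_atTop a] with k hk
    simp [hk, Nat.sub_sub]
  · split_ifs
    · simpa [abs_mul] using mul_le_mul_of_nonneg_left (hgB _) (abs_nonneg (f a))
    · simpa using mul_nonneg (abs_nonneg (f a)) ((abs_nonneg _).trans (hgB 0))
  · rw [tsum_eq_sum (s := range k) fun a ha => by simp_all]
    exact sum_congr rfl fun a ha => by simp_all

theorem summable_pow_div {r : ℝ} (h0 : 0 ≤ r) (h1 : r < 1) {K : ℕ} (hK : 0 < K) :
    Summable fun a : ℕ => r ^ (a / K) := by
  have : NeZero K := ⟨hK.ne'⟩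
  rw [← (Nat.divModEquiv K).symm.summable_iff]
  convert (summable_geometric_of_lt_one h0 h1).mul_of_nonneg
    (hasSum_fintype fun _ : Fin K => (1 : ℝ)).summable (fun _ => pow_nonneg h0 _)
    (fun _ => zero_le_one) using 2 with p
  simpa using congrArg (fun q : ℕ × Fin K => r ^ q.1) ((Nat.divModEquiv K).apply_symm_apply p)

theorem HasSum.matrix_mul_right {l m n R X : Type*} [Fintype m] [NonUnitalNonAssocSemiring R]
    [TopologicalSpace R] [IsTopologicalSemiring R] {f : X → Matrix l m R} {S : Matrix l m R}
    (hf : HasSum f S) (B : Matrix m n R) : HasSum (fun x => f x * B) (S * B) :=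
  Pi.hasSum.2 fun i => Pi.hasSum.2 fun j => by
    simpa only [mul_apply] using
      hasSum_sum fun h _ => (Pi.hasSum.1 (Pi.hasSum.1 hf i) h).mul_right (B h j)

namespace Matrix

section Algebra

variable {l m n p R : Type*}

theorem kronecker_pow [CommSemiring R] [Fintype l] [DecidableEq l] [Fintype m] [DecidableEq m]
    (A : Matrix l l R) (B : Matrix m m R) (k : ℕ) : (A ⊗ₖ B) ^ k = (A ^ k) ⊗ₖ (B ^ k) := by
  induction k with
  | zero => simp
  | succ k ih => rw [pow_succ, ih, ← mul_kronecker_mul, ← pow_succ, ← pow_succ]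

theorem kronecker_mulVec_mul [CommSemiring R] [Fintype m] [Fintype p] (A : Matrix l m R)
    (B : Matrix n p R) (x : m → R) (y : p → R) :
    (A ⊗ₖ B) *ᵥ (fun q => x q.1 * y q.2) = fun q => (A *ᵥ x) q.1 * (B *ᵥ y) q.2 := by
  ext q
  simp only [mulVec, dotProduct, Fintype.sum_prod_type, kroneckerMap_apply, sum_mul_sum]
  exact sum_congr rfl fun _ _ => sum_congr rfl fun _ _ => by ring

theorem one_sub_diagonal_kronecker_one_mulVec [CommRing R] [Fintype l] [DecidableEq l]
    [Fintype m] [DecidableEq m] (d : l → R) (u : l × m → R) :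
    ((1 - diagonal d) ⊗ₖ (1 : Matrix m m R)) *ᵥ u = fun p => (1 - d p.1) * u p := by
  rw [← diagonal_one, ← diagonal_one, diagonal_sub, diagonal_kronecker_diagonal]
  ext p
  simp [mulVec_diagonal]

theorem iterate_mulVec_add [Fintype n] [DecidableEq n] [Semiring R] (M : Matrix n n R)
    (b u : n → R) (k : ℕ) :
    (fun x => M *ᵥ x + b)^[k] u = M ^ k *ᵥ u + ∑ j ∈ range k, M ^ j *ᵥ b := by
  induction k with
  | zero => simp
  | succ k ih =>
    rw [Function.iterate_succ_apply', ih, mulVec_add, mulVec_mulVec, mulVec_sum, sum_range_succ',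
      add_assoc]
    simp [mulVec_mulVec, ← pow_succ']

theorem fromBlocks_zero₂₁_pow [Fintype l] [DecidableEq l] [Fintype m] [DecidableEq m] [Semiring R]
    (A : Matrix l l R) (B : Matrix l m R) (D : Matrix m m R) (k : ℕ) :
    fromBlocks A B 0 D ^ k
      = fromBlocks (A ^ k) (∑ a ∈ range k, A ^ a * B * D ^ (k - 1 - a)) 0 (D ^ k) := by
  induction k with
  | zero => simp [fromBlocks_one]
  | succ k ih =>
    have hB : A * (∑ a ∈ range k, A ^ a * B * D ^ (k - 1 - a)) + B * D ^ k
        = ∑ a ∈ range (k + 1), A ^ a * B * D ^ (k + 1 - 1 - a) := by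
      rw [sum_range_succ', Matrix.mul_sum]
      congr 1
      · refine sum_congr rfl fun a _ => ?_
        rw [← Matrix.mul_assoc, ← Matrix.mul_assoc, ← pow_succ']
        congr 2
        omega
      · simp
    rw [pow_succ', ih, fromBlocks_multiply, hB]
    simp [← pow_succ']

theorem fromBlocks_zero₂₁_kronecker_pow_mulVec_inr [Fintype l] [DecidableEq l] [Fintype m]
    [DecidableEq m] [Fintype n] [DecidableEq n] [CommSemiring R] (A : Matrix l l R)
    (B : Matrix l m R) (D : Matrix m m R) (C : Matrix n n R) (w : l ⊕ m → R) (v : n → R) (k : ℕ)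
    (i : m) (j : n) :
    ((fromBlocks A B 0 D ⊗ₖ C) ^ k *ᵥ fun q => w q.1 * v q.2) (.inr i, j)
      = (D ^ k *ᵥ (w ∘ .inr)) i * (C ^ k *ᵥ v) j := by
  rw [kronecker_pow, kronecker_mulVec_mul, fromBlocks_zero₂₁_pow, fromBlocks_mulVec]
  simp

end Algebra

section Topology

variable {l m n p R X : Type*} {F : Filter X} [TopologicalSpace R]

theorem tendsto_sum_range_mul_sub [Fintype m] {f : ℕ → Matrix l m ℝ} {g : ℕ → Matrix m n ℝ}
    {G : Matrix m n ℝ} (hf : Summable f) (hg : Tendsto g atTop (𝓝 G)) :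
    Tendsto (fun k => ∑ a ∈ range k, f a * g (k - 1 - a)) atTop (𝓝 ((∑' a, f a) * G)) := by
  refine tendsto_pi_nhds.2 fun i => tendsto_pi_nhds.2 fun j => ?_
  have hS : ∀ h, HasSum (fun a => f a i h) ((∑' a, f a) i h) := fun h =>
    Pi.hasSum.1 (Pi.hasSum.1 hf.hasSum i) h
  simp only [sum_apply, mul_apply]
  simp_rw [sum_comm (s := range _)]
  exact tendsto_finsetSum _ fun h _ => by
    simpa only [(hS h).tsum_eq] using
      _root_.tendsto_sum_range_mul_sub (hS h).summable ((hg.apply_nhds h).apply_nhds j)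

theorem _root_.Filter.Tendsto.matrix_fromBlocks {A : X → Matrix n l R} {B : X → Matrix n m R}
    {C : X → Matrix p l R} {D : X → Matrix p m R} {A' B' C' D'}
    (hA : Tendsto A F (𝓝 A')) (hB : Tendsto B F (𝓝 B')) (hC : Tendsto C F (𝓝 C'))
    (hD : Tendsto D F (𝓝 D')) :
    Tendsto (fun x => fromBlocks (A x) (B x) (C x) (D x)) F (𝓝 (fromBlocks A' B' C' D')) :=
  ((continuous_fst.fst.matrix_fromBlocks continuous_fst.snd continuous_snd.fst
    continuous_snd.snd).tendsto ((A', B'), (C', D'))).comp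
    ((hA.prodMk_nhds hB).prodMk_nhds (hC.prodMk_nhds hD))

theorem _root_.Filter.Tendsto.matrix_kronecker [Mul R] [ContinuousMul R] {A : X → Matrix l m R}
    {B : X → Matrix n p R} {A' B'} (hA : Tendsto A F (𝓝 A')) (hB : Tendsto B F (𝓝 B')) :
    Tendsto (fun x => A x ⊗ₖ B x) F (𝓝 (A' ⊗ₖ B')) :=
  tendsto_pi_nhds.2 fun i => tendsto_pi_nhds.2 fun j =>
    ((hA.apply_nhds i.1).apply_nhds j.1).mul ((hB.apply_nhds i.2).apply_nhds j.2)

theorem tendsto_kronecker_zero_of_bounded {A : X → Matrix l m ℝ} {B : X → Matrix n p ℝ} {c : ℝ}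
    (hA : ∀ x i j, |A x i j| ≤ c) (hB : Tendsto B F (𝓝 0)) :
    Tendsto (fun x => A x ⊗ₖ B x) F (𝓝 0) :=
  tendsto_pi_nhds.2 fun i => tendsto_pi_nhds.2 fun j =>
    isBoundedUnder_le_mul_tendsto_zero (isBoundedUnder_of ⟨c, fun x => hA x i.1 j.1⟩)
      ((hB.apply_nhds i.2).apply_nhds j.2)

theorem tendsto_iterate_mulVec_add [Fintype n] [DecidableEq n] [Semiring R]
    [IsTopologicalSemiring R] {M M' : Matrix n n R} (hM : Tendsto (M ^ ·) atTop (𝓝 M'))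
    {b : n → R} (hb : Summable fun a => M ^ a *ᵥ b) (u : n → R) :
    Tendsto (fun k => (fun x => M *ᵥ x + b)^[k] u) atTop (𝓝 (M' *ᵥ u + ∑' a, M ^ a *ᵥ b)) := by
  simp_rw [iterate_mulVec_add]
  exact (((continuous_id.matrix_mulVec continuous_const).tendsto M').comp hM).add
    hb.hasSum.tendsto_sum_nat

end Topology

section Substochastic

variable {R n : Type*} [Fintype n] [Semiring R] [PartialOrder R] [IsOrderedRing R]

theorem mulVec_le_mulVec_of_nonneg {M : Matrix n n R} (hM : ∀ i j, 0 ≤ M i j) {x y : n → R}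
    (hxy : x ≤ y) : M *ᵥ x ≤ M *ᵥ y :=
  fun i => dotProduct_le_dotProduct_of_nonneg_left hxy (hM i)

theorem apply_le_mulVec_one {M : Matrix n n R} (hM : ∀ i j, 0 ≤ M i j) (i j : n) :
    M i j ≤ (M *ᵥ 1) i := by
  simpa [mulVec, dotProduct] using single_le_sum (fun k _ => hM i k) (mem_univ j)

variable [DecidableEq n]

variable (R n) in
def rowSubstochastic : Submonoid (Matrix n n R) where
  carrier := {M | (∀ i j, 0 ≤ M i j) ∧ M *ᵥ 1 ≤ 1}
  mul_mem' {M N} hM hN := by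
    refine ⟨fun i j => sum_nonneg fun h _ => mul_nonneg (hM.1 _ _) (hN.1 _ _), ?_⟩
    rw [← mulVec_mulVec]
    exact (mulVec_le_mulVec_of_nonneg hM.1 hN.2).trans hM.2
  one_mem' := ⟨fun i j => by by_cases h : i = j <;> simp [one_apply, h], by simp⟩

variable {M : Matrix n n R}

theorem le_one_of_mem_rowSubstochastic (hM : M ∈ rowSubstochastic R n) (i j : n) :
    M i j ≤ 1 :=
  (apply_le_mulVec_one hM.1 i j).trans (hM.2 i)

theorem mulVec_one_antitone (hM : M ∈ rowSubstochastic R n) :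
    Antitone fun k : ℕ => M ^ k *ᵥ 1 := by
  refine antitone_nat_of_succ_le fun k => ?_
  rw [pow_succ, ← mulVec_mulVec]
  exact mulVec_le_mulVec_of_nonneg (pow_mem hM k).1 hM.2

theorem diagonal_mul_mulVec_one {W : Matrix n n R} (hW : W ∈ rowStochastic R n) (d : n → R) :
    (diagonal d * W) *ᵥ 1 = d := by
  rw [← mulVec_mulVec, one_vecMul_of_mem_rowStochastic hW]
  ext i
  simp [mulVec_diagonal]

theorem diagonal_mul_mem_rowSubstochastic {W : Matrix n n R} (hW : W ∈ rowStochastic R n)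
    {d : n → R} (hd : ∀ i, 0 ≤ d i ∧ d i ≤ 1) : diagonal d * W ∈ rowSubstochastic R n :=
  ⟨fun i j => by simpa [diagonal_mul] using mul_nonneg (hd i).1 (hW.1 i j),
    by rw [diagonal_mul_mulVec_one hW]; exact fun i => (hd i).2⟩

end Substochastic

section Blocks

variable {R α β : Type*} [Fintype α] [Fintype β] [Semiring R] [PartialOrder R] [IsOrderedRing R]

theorem toBlocks₁₁_mulVec_one_le {M : Matrix (α ⊕ β) (α ⊕ β) R} (hM : ∀ i j, 0 ≤ M i j)
    (i : α) : (M.toBlocks₁₁ *ᵥ 1) i ≤ (M *ᵥ 1) (.inl i) := by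
  simp only [mulVec, dotProduct, Fintype.sum_sum_type, toBlocks₁₁, of_apply]
  exact le_add_of_nonneg_right (sum_nonneg fun j _ => by simpa using hM _ _)

variable [DecidableEq α] [DecidableEq β]

theorem toBlocks₁₁_mem_rowSubstochastic {M : Matrix (α ⊕ β) (α ⊕ β) R}
    (hM : M ∈ rowSubstochastic R (α ⊕ β)) : M.toBlocks₁₁ ∈ rowSubstochastic R α :=
  ⟨fun _ _ => hM.1 _ _, fun i => (toBlocks₁₁_mulVec_one_le hM.1 i).trans (hM.2 _)⟩

theorem mem_rowStochastic_of_fromBlocks_zero₂₁ {A : Matrix α α R} {B : Matrix α β R}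
    {D : Matrix β β R} (h : fromBlocks A B 0 D ∈ rowStochastic R (α ⊕ β)) :
    D ∈ rowStochastic R β := by
  rw [mem_rowStochastic_iff_sum] at h ⊢
  refine ⟨fun i j => h.1 (.inr i) (.inr j), fun i => ?_⟩
  simpa [Fintype.sum_sum_type] using h.2 (.inr i)

end Blocks

section Contraction

variable {ι : Type*} [Fintype ι] [DecidableEq ι] {M : Matrix ι ι ℝ}

theorem exists_reflTransGen_diagonal_mul {d : ι → ℝ} {W : Matrix ι ι ℝ} {i j : ι}
    (h : Relation.ReflTransGen (fun a b => 0 < W a b) i j) (hj : d j < 1) :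
    ∃ j', Relation.ReflTransGen (fun a b => 0 < (diagonal d * W) a b) i j' ∧ d j' < 1 := by
  induction h using Relation.ReflTransGen.head_induction_on with
  | refl => exact ⟨j, .refl, hj⟩
  | @head a c hac _ ih =>
    by_cases ha : d a < 1
    · exact ⟨a, .refl, ha⟩
    obtain ⟨j', hcj', hj'⟩ := ih
    refine ⟨j', .head ?_ hcj', hj'⟩
    simpa [diagonal_mul] using mul_pos (one_pos.trans_le (not_lt.1 ha)) hac

theorem exists_pow_succ_mulVec_one_lt_one (hM : M ∈ rowSubstochastic ℝ ι) {i j : ι}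
    (h : Relation.ReflTransGen (fun a b => 0 < M a b) i j) (hj : (M *ᵥ 1) j < 1) :
    ∃ k, (M ^ (k + 1) *ᵥ 1) i < 1 := by
  induction h using Relation.ReflTransGen.head_induction_on with
  | refl => exact ⟨0, by simpa using hj⟩
  | @head a c hac _ ih =>
    obtain ⟨k, hk⟩ := ih
    refine ⟨k + 1, ?_⟩
    rw [pow_succ', ← mulVec_mulVec]
    calc (M *ᵥ (M ^ (k + 1) *ᵥ 1)) a < (M *ᵥ 1) a := by
          refine sum_lt_sum (fun b _ => ?_) ⟨c, mem_univ c, ?_⟩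
          · exact mul_le_mul_of_nonneg_left ((pow_mem hM _).2 b) (hM.1 a b)
          · exact mul_lt_mul_of_pos_left hk hac
      _ ≤ 1 := hM.2 a

theorem pow_mulVec_one_le_pow_div (hM : M ∈ rowSubstochastic ℝ ι) {K : ℕ} {r : ℝ} (hr : 0 ≤ r)
    (hK : M ^ K *ᵥ 1 ≤ r • 1) (a : ℕ) : M ^ a *ᵥ 1 ≤ r ^ (a / K) • 1 := by
  have hKq : ∀ q, M ^ (K * q) *ᵥ 1 ≤ r ^ q • 1 := by
    intro q
    induction q with
    | zero => simp
    | succ q ih =>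
      calc M ^ (K * (q + 1)) *ᵥ 1 = M ^ (K * q) *ᵥ (M ^ K *ᵥ 1) := by
            rw [mulVec_mulVec, ← pow_add, mul_add_one]
        _ ≤ M ^ (K * q) *ᵥ (r • 1) := mulVec_le_mulVec_of_nonneg (pow_mem hM _).1 hK
        _ = r • (M ^ (K * q) *ᵥ 1) := mulVec_smul _ _ _
        _ ≤ r • (r ^ q • 1) := smul_le_smul_of_nonneg_left ih hr
        _ = r ^ (q + 1) • 1 := by rw [smul_smul, pow_succ']
  exact (mulVec_one_antitone hM (Nat.mul_div_le a K)).trans (hKq _)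

theorem summable_pow_of_forall_mulVec_one_lt_one (hM : M ∈ rowSubstochastic ℝ ι)
    (h : ∀ i, ∃ k, (M ^ k *ᵥ 1) i < 1) : Summable fun a => M ^ a := by
  choose k hk using h
  set K := ∑ i, k i + 1
  -- working entrywise provides a row `i₀`, so the maximal row sum `r` of `M ^ K` is defined
  refine Pi.summable.2 fun i₀ => Pi.summable.2 fun j => ?_
  set r := univ.sup' ⟨i₀, mem_univ _⟩ fun i => (M ^ K *ᵥ 1) i
  have hK : ∀ i, (M ^ K *ᵥ 1) i < 1 := fun i =>
    (mulVec_one_antitone hM (single_le_sum (fun _ _ => Nat.zero_le _) (mem_univ i)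
      |>.trans (Nat.le_succ _)) i).trans_lt (hk i)
  have hKr : M ^ K *ᵥ 1 ≤ r • 1 := fun i => by
    simpa using le_sup' (fun i => (M ^ K *ᵥ 1) i) (mem_univ i)
  have hr0 : 0 ≤ r := calc
    0 ≤ (M ^ K) i₀ i₀ := (pow_mem hM K).1 i₀ i₀
    _ ≤ (M ^ K *ᵥ 1) i₀ := apply_le_mulVec_one (pow_mem hM K).1 i₀ i₀
    _ ≤ r := by simpa using hKr i₀
  refine (summable_pow_div hr0 ((sup'_lt_iff _).2 fun i _ => hK i)
    (Nat.zero_lt_succ _ : 0 < K)).of_nonneg_of_le (fun a => (pow_mem hM a).1 i₀ j) fun a => ?_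
  simpa using (apply_le_mulVec_one (pow_mem hM a).1 i₀ j).trans
    (pow_mulVec_one_le_pow_div hM hr0 hKr a i₀)

end Contraction

section UpperTriangular

variable {α β γ : Type*} [Fintype α] [Fintype β] [Fintype γ] [DecidableEq α] [DecidableEq β]
  [DecidableEq γ]

theorem summable_pow_toBlocks₁₁ {P : Matrix (α ⊕ β) (α ⊕ β) ℝ}
    (hP : P ∈ rowSubstochastic ℝ (α ⊕ β)) (h₂₁ : P.toBlocks₂₁ = 0)
    (h : ∀ i, ∃ j, Relation.ReflTransGen (fun a b => 0 < P a b) (.inl i) j ∧ (P *ᵥ 1) j < 1) :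
    Summable fun a => P.toBlocks₁₁ ^ a := by
  refine summable_pow_of_forall_mulVec_one_lt_one (toBlocks₁₁_mem_rowSubstochastic hP)
    fun i => ?_
  obtain ⟨j, hij, hj⟩ := h i
  obtain ⟨k, hk⟩ := exists_pow_succ_mulVec_one_lt_one hP hij hj
  have hpow : P.toBlocks₁₁ ^ (k + 1) = (P ^ (k + 1)).toBlocks₁₁ := by
    conv_rhs => rw [← fromBlocks_toBlocks P, h₂₁, fromBlocks_zero₂₁_pow, toBlocks_fromBlocks₁₁]
  exact ⟨k + 1, hpow ▸ (toBlocks₁₁_mulVec_one_le (pow_mem hP (k + 1)).1 i).trans_lt hk⟩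

theorem summable_pow_toBlocks₁₁_diagonal_mul {W : Matrix (α ⊕ β) (α ⊕ β) ℝ}
    (hW : W ∈ rowStochastic ℝ (α ⊕ β)) {d : α ⊕ β → ℝ} (hd : ∀ i, 0 ≤ d i ∧ d i ≤ 1)
    (h₂₁ : (diagonal d * W).toBlocks₂₁ = 0)
    (h : ∀ i, d (.inl i) < 1 ∨ ∃ j, d j < 1 ∧ Relation.TransGen (fun a b => 0 < W a b) (.inl i) j) :
    Summable fun a => (diagonal d * W).toBlocks₁₁ ^ a := by
  refine summable_pow_toBlocks₁₁ (diagonal_mul_mem_rowSubstochastic hW hd) h₂₁ fun i => ?_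
  rw [diagonal_mul_mulVec_one hW]
  rcases h i with h | ⟨j, hj, h⟩
  exacts [⟨_, .refl, h⟩, exists_reflTransGen_diagonal_mul h.to_reflTransGen hj]

theorem tendsto_fromBlocks_zero₂₁_pow {A : Matrix α α ℝ} (B : Matrix α β ℝ)
    {D D' : Matrix β β ℝ} (hA : Summable fun a => A ^ a) (hD : Tendsto (D ^ ·) atTop (𝓝 D')) :
    Tendsto (fun k => fromBlocks A B 0 D ^ k) atTop
      (𝓝 (fromBlocks 0 ((∑' a, A ^ a) * B * D') 0 D')) := by
  simp_rw [fromBlocks_zero₂₁_pow]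
  have hAB := hA.hasSum.matrix_mul_right B
  refine hA.tendsto_atTop_zero.matrix_fromBlocks ?_ tendsto_const_nhds hD
  rw [← hAB.tsum_eq]
  exact tendsto_sum_range_mul_sub hAB.summable hD

theorem summable_fromBlocks_zero₂₁_pow_apply_inl {A : Matrix α α ℝ} (B : Matrix α β ℝ)
    (D : Matrix β β ℝ) (hA : Summable fun a => A ^ a) (i : α ⊕ β) (j : α) :
    Summable fun a => (fromBlocks A B 0 D ^ a) i (.inl j) := by
  simp_rw [fromBlocks_zero₂₁_pow]
  rcases i with i | i
  · simpa using Pi.summable.1 (Pi.summable.1 hA i) j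
  · simp

theorem summable_fromBlocks_zero₂₁_kronecker_pow_mulVec {A : Matrix α α ℝ} (B : Matrix α β ℝ)
    (D : Matrix β β ℝ) {C C' : Matrix γ γ ℝ} (hA : Summable fun a => A ^ a)
    (hC : Tendsto (C ^ ·) atTop (𝓝 C')) {b : (α ⊕ β) × γ → ℝ} (hb : ∀ j l, b (.inr j, l) = 0) :
    Summable fun a => (fromBlocks A B 0 D ⊗ₖ C) ^ a *ᵥ b := by
  refine Pi.summable.2 fun p => ?_
  simp only [kronecker_pow, mulVec, dotProduct, Fintype.sum_prod_type, Fintype.sum_sum_type,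
    kroneckerMap_apply, hb, mul_zero, sum_const_zero, add_zero]
  refine summable_sum fun j _ => summable_sum fun l _ => Summable.mul_right _ ?_
  refine Summable.mul_tendsto_const ?_ (Nat.cofinite_eq_atTop ▸ (hC.apply_nhds p.2).apply_nhds l)
  simpa only [Real.norm_eq_abs] using (summable_fromBlocks_zero₂₁_pow_apply_inl B D hA p.1 j).abs

theorem exists_tendsto_iterate_of_regular {A : Matrix α α ℝ} {B : Matrix α β ℝ}
    {D : Matrix β β ℝ} {C C' : Matrix γ γ ℝ}
    (hP : fromBlocks A B 0 D ∈ rowSubstochastic ℝ (α ⊕ β)) (hA : Summable fun a => A ^ a)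
    (hC : Tendsto (C ^ ·) atTop (𝓝 C')) (hCD : C' = 0 ∨ ∃ D', Tendsto (D ^ ·) atTop (𝓝 D'))
    {b : (α ⊕ β) × γ → ℝ} (hb : ∀ j l, b (.inr j, l) = 0) (u : (α ⊕ β) × γ → ℝ) :
    ∃ L, Tendsto (fun k => (fun x => (fromBlocks A B 0 D ⊗ₖ C) *ᵥ x + b)^[k] u) atTop (𝓝 L) := by
  obtain ⟨M, hM⟩ : ∃ M, Tendsto (fun k => (fromBlocks A B 0 D ⊗ₖ C) ^ k) atTop (𝓝 M) := by
    simp_rw [kronecker_pow]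
    rcases hCD with rfl | ⟨D', hD⟩
    · exact ⟨0, tendsto_kronecker_zero_of_bounded (fun k i j => (abs_of_nonneg
        ((pow_mem hP k).1 i j)).trans_le (le_one_of_mem_rowSubstochastic (pow_mem hP k) i j)) hC⟩
    · exact ⟨_, (tendsto_fromBlocks_zero₂₁_pow B hA hD).matrix_kronecker hC⟩
  exact ⟨_, tendsto_iterate_mulVec_add hM
    (summable_fromBlocks_zero₂₁_kronecker_pow_mulVec B D hA hC hb) u⟩

theorem exists_tendsto_pow_mulVec_mul_of_forall_tendsto_iterate {A : Matrix α α ℝ}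
    {B : Matrix α β ℝ} {D : Matrix β β ℝ} {C : Matrix γ γ ℝ} {d : α ⊕ β → ℝ}
    (hd : ∀ j, d (.inr j) = 1)
    (H : ∀ u, ∃ L, Tendsto (fun k => (fun x => (fromBlocks A B 0 D ⊗ₖ C) *ᵥ x
      + ((1 - diagonal d) ⊗ₖ (1 : Matrix γ γ ℝ)) *ᵥ u)^[k] u) atTop (𝓝 L))
    (w : β → ℝ) (v : γ → ℝ) (i : β) (l : γ) :
    ∃ L, Tendsto (fun k => (D ^ k *ᵥ w) i * (C ^ k *ᵥ v) l) atTop (𝓝 L) := by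
  obtain ⟨L, hL⟩ := H fun q => Sum.elim (fun _ => 0) w q.1 * v q.2
  have hb : (fun q : (α ⊕ β) × γ => (1 - d q.1) * (Sum.elim (fun _ => 0) w q.1 * v q.2)) = 0 := by
    ext ⟨j | j, l⟩ <;> simp [hd]
  simp only [iterate_mulVec_add, one_sub_diagonal_kronecker_one_mulVec, hb] at hL
  exact ⟨L (.inr i, l), by
    simpa [fromBlocks_zero₂₁_kronecker_pow_mulVec_inr] using hL.apply_nhds (.inr i, l)⟩

theorem exists_tendsto_pow_of_forall_tendsto_mul [Nonempty β] {D : Matrix β β ℝ}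
    (hD : D ∈ rowStochastic ℝ β) {C : Matrix γ γ ℝ}
    (h : ∀ w v i l, ∃ L, Tendsto (fun k => (D ^ k *ᵥ w) i * (C ^ k *ᵥ v) l) atTop (𝓝 L)) :
    ∃ C', Tendsto (C ^ ·) atTop (𝓝 C') ∧ (C' = 0 ∨ ∃ D', Tendsto (D ^ ·) atTop (𝓝 D')) := by
  obtain ⟨i₀⟩ := ‹Nonempty β›
  have hC : ∀ l l', ∃ c, Tendsto (fun k => (C ^ k) l l') atTop (𝓝 c) := fun l l' => by
    simpa [one_vecMul_of_mem_rowStochastic (pow_mem hD _)] using h 1 (Pi.single l' 1) i₀ l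
  choose C' hC' using hC
  refine ⟨of C', tendsto_pi_nhds.2 fun l => tendsto_pi_nhds.2 (hC' l), ?_⟩
  rcases eq_or_ne (of C') 0 with hC0 | hC0
  · exact .inl hC0
  obtain ⟨l, l', hne⟩ : ∃ l l', C' l l' ≠ 0 := by
    by_contra! h
    exact hC0 (ext h)
  have hD : ∀ i j, ∃ d, Tendsto (fun k => (D ^ k) i j) atTop (𝓝 d) := fun i j => by
    obtain ⟨L, hL⟩ := h (Pi.single j 1) (Pi.single l' 1) i l
    simp only [mulVec_single_one, col_apply] at hL
    exact ⟨L / C' l l', (hL.div (hC' l l') hne).congr' <|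
      ((hC' l l').eventually_ne hne).mono fun k hk => mul_div_cancel_right₀ _ hk⟩
  choose D' hD' using hD
  exact .inr ⟨of D', tendsto_pi_nhds.2 fun i => tendsto_pi_nhds.2 (hD' i)⟩

end UpperTriangular

end Matrix

/-- with oblivious agents exactly the second block (so W = [[W¹¹,W¹²],[0,W²²]],
Λ = [[Λ¹¹,0],[0,I]]), the multidimensional FJ model x(k+1) = (ΛW ⊗ C)x(k) + ((I-Λ) ⊗ I)u
is convergent iff C is regular and either C_* = lim C^k = 0 or W²² is regular. -/
theorem fj_multidim_convergent_iff {n₁ n₂ m : ℕ} (hn₂ : 0 < n₂)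
    (W11 : Matrix (Fin n₁) (Fin n₁) ℝ) (W12 : Matrix (Fin n₁) (Fin n₂) ℝ)
    (W22 : Matrix (Fin n₂) (Fin n₂) ℝ) (lam1 : Fin n₁ → ℝ)
    (W : Matrix (Fin n₁ ⊕ Fin n₂) (Fin n₁ ⊕ Fin n₂) ℝ)
    (hWblock : W = Matrix.fromBlocks W11 W12 0 W22)
    (lam : Fin n₁ ⊕ Fin n₂ → ℝ)
    (hlamblock : lam = Sum.elim lam1 (fun _ => 1))
    (hW0 : ∀ i j, 0 ≤ W i j) (hW1 : ∀ i, ∑ j, W i j = 1)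
    (hlam : ∀ i, 0 ≤ lam i ∧ lam i ≤ 1)
    (C : Matrix (Fin m) (Fin m) ℝ)
    -- the oblivious agents are exactly the agents of the second block:
    (hobl : ∀ i : Fin n₁ ⊕ Fin n₂,
      (¬ (lam i < 1 ∨ ∃ j, lam j < 1 ∧ Relation.TransGen (fun a b => 0 < W a b) i j)) ↔
        ∃ i₂ : Fin n₂, i = Sum.inr i₂) :
    (∀ u : (Fin n₁ ⊕ Fin n₂) × Fin m → ℝ, ∃ L : (Fin n₁ ⊕ Fin n₂) × Fin m → ℝ,
        Tendsto (fun k => (fun x => ((Matrix.diagonal lam * W) ⊗ₖ C).mulVec x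
            + ((1 - Matrix.diagonal lam) ⊗ₖ (1 : Matrix (Fin m) (Fin m) ℝ)).mulVec u)^[k] u)
          atTop (nhds L)) ↔
      (∃ Cstar : Matrix (Fin m) (Fin m) ℝ,
        Tendsto (fun k => C ^ k) atTop (nhds Cstar) ∧
        (Cstar = 0 ∨ ∃ W22star : Matrix (Fin n₂) (Fin n₂) ℝ,
          Tendsto (fun k => W22 ^ k) atTop (nhds W22star))) := by
  have hWst : W ∈ rowStochastic ℝ _ := mem_rowStochastic_iff_sum.2 ⟨hW0, hW1⟩
  have hPblocks : diagonal lam * W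
      = fromBlocks (diagonal lam1 * W11) (diagonal lam1 * W12) 0 W22 := by
    subst hWblock hlamblock
    ext (i | i) (j | j) <;> simp [diagonal_mul]
  have hP := hPblocks ▸ diagonal_mul_mem_rowSubstochastic hWst hlam
  have hA : Summable fun a => (diagonal lam1 * W11) ^ a := by
    simpa [hPblocks] using summable_pow_toBlocks₁₁_diagonal_mul hWst hlam (by simp [hPblocks])
      fun i => not_not.1 ((hobl (.inl i)).not.2 (by simp))
  subst hlamblock
  rw [hPblocks]
  constructor
  · intro H
    have : Nonempty (Fin n₂) := ⟨⟨0, hn₂⟩⟩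
    exact exists_tendsto_pow_of_forall_tendsto_mul
      (mem_rowStochastic_of_fromBlocks_zero₂₁ (hWblock ▸ hWst))
      (exists_tendsto_pow_mulVec_mul_of_forall_tendsto_iterate (fun _ => rfl) H)
  · rintro ⟨C', hC, hCD⟩ u
    exact exists_tendsto_iterate_of_regular hP hA hC hCD
      (fun j l => by simp [one_sub_diagonal_kronecker_one_mulVec]) u
end
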